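/- arXiv:2007.15445 — 5 statements merged into one kernel-verified Lean document; each statement's English description precedes it below -/
import Mathlib

section
/- Let n ≥ 3 and let ε, θ, λ be real numbers with λ ≠ 0 and θ² − 4λ(ε − 2λ) > 0. Let π₁ = θ/2 + √(θ² − 4λ(ε − 2λ))/2 and π₂ = θ/2 − √(θ² − 4λ(ε − 2λ))/2 (the two real roots of s² − θs + λ(ε − 2λ) = 0). Let P be the n×n pentadiagonal Toeplitz matrix with diagonal entries ε except for the two corner diagonal entries P₁₁ = Pₙₙ = ε − λ, with θ on the first off-diagonals, λ on the second off-diagonals, and zeros elsewhere. Then P = Z₁ Z₂, where Z₁ is the n×n tridiagonal Toeplitz matrix with diagonal entries π₁ and first off-diagonal entries λ, and Z₂ is the n×n tridiagonal Toeplitz matrix with diagonal entries π₂/λ and first off-diagonal entries 1. In particular, the corner perturbations ζ₁, ζ₂ of a factorizable such matrix both equal λ. -/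
open Matrix Real

lemma three_sum (n iv : ℕ) (hiv : iv < n) (f : ℕ → ℝ)
    (hf : ∀ k, k < n → k + 1 ≠ iv → k ≠ iv → k ≠ iv + 1 → f k = 0) :
    ∑ k ∈ Finset.range n, f k =
      (if 1 ≤ iv then f (iv - 1) else 0) + f iv + (if iv + 1 < n then f (iv + 1) else 0) := by
  have hpt : ∀ k ∈ Finset.range n, f k =
      (if k + 1 = iv then f k else 0) + (if k = iv then f k else 0) +
        (if k = iv + 1 then f k else 0) := by
    intro k hk
    rw [Finset.mem_range] at hk
    by_cases h1 : k + 1 = iv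
    · rw [if_pos h1, if_neg (by omega), if_neg (by omega)]; ring
    · by_cases h2 : k = iv
      · rw [if_neg h1, if_pos h2, if_neg (by omega)]; ring
      · by_cases h3 : k = iv + 1
        · rw [if_neg h1, if_neg h2, if_pos h3]; ring
        · rw [if_neg h1, if_neg h2, if_neg h3, hf k hk h1 h2 h3]; ring
  rw [Finset.sum_congr rfl hpt]
  rw [Finset.sum_add_distrib, Finset.sum_add_distrib]
  congr 1
  · congr 1
    · by_cases h1 : 1 ≤ iv
      · have : ∀ k ∈ Finset.range n, (if k + 1 = iv then f k else 0) = (if k = iv - 1 then f k else 0) := by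
          intro k _
          by_cases h : k + 1 = iv
          · rw [if_pos h, if_pos (by omega)]
          · rw [if_neg h, if_neg (by omega)]
        rw [Finset.sum_congr rfl this, Finset.sum_ite_eq' (Finset.range n) (iv - 1) f,
          if_pos (Finset.mem_range.mpr (by omega)), if_pos h1]
      · rw [if_neg h1]
        exact Finset.sum_eq_zero fun k _ => if_neg (by omega)
    · rw [Finset.sum_ite_eq' (Finset.range n) iv f, if_pos (Finset.mem_range.mpr hiv)]
  · rw [Finset.sum_ite_eq' (Finset.range n) (iv + 1) f]
    by_cases h2 : iv + 1 < n
    · rw [if_pos (Finset.mem_range.mpr h2), if_pos h2]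
    · rw [if_neg (by simpa using h2), if_neg h2]

/-- Factorization of a pentadiagonal Toeplitz matrix with modified corner
elements into two tridiagonal Toeplitz matrices. -/
theorem stmt_0 (n : ℕ) (hn : 3 ≤ n) (ε θ lam : ℝ) (hlam : lam ≠ 0)
    (hdisc : θ ^ 2 - 4 * lam * (ε - 2 * lam) > 0)
    (π₁ π₂ : ℝ)
    (hπ₁ : π₁ = θ / 2 + Real.sqrt (θ ^ 2 - 4 * lam * (ε - 2 * lam)) / 2)
    (hπ₂ : π₂ = θ / 2 - Real.sqrt (θ ^ 2 - 4 * lam * (ε - 2 * lam)) / 2)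
    (P Z₁ Z₂ : Matrix (Fin n) (Fin n) ℝ)
    (hP : ∀ i j : Fin n,
      P i j =
        if (i : ℕ) = (j : ℕ) then
          (if (i : ℕ) = 0 ∨ (i : ℕ) = n - 1 then ε - lam else ε)
        else if ((i : ℤ) - (j : ℤ)).natAbs = 1 then θ
        else if ((i : ℤ) - (j : ℤ)).natAbs = 2 then lam
        else 0)
    (hZ₁ : ∀ i j : Fin n,
      Z₁ i j =
        if (i : ℕ) = (j : ℕ) then π₁
        else if ((i : ℤ) - (j : ℤ)).natAbs = 1 then lam
        else 0)
    (hZ₂ : ∀ i j : Fin n,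
      Z₂ i j =
        if (i : ℕ) = (j : ℕ) then π₂ / lam
        else if ((i : ℤ) - (j : ℤ)).natAbs = 1 then 1
        else 0) :
    P = Z₁ * Z₂ := by
  have hd : Real.sqrt (θ ^ 2 - 4 * lam * (ε - 2 * lam)) ^ 2 = θ ^ 2 - 4 * lam * (ε - 2 * lam) :=
    Real.sq_sqrt hdisc.le
  have hprod : π₁ * π₂ = lam * (ε - 2 * lam) := by
    rw [hπ₁, hπ₂]; linear_combination (-(1:ℝ)/4) * hd
  have hpp : π₁ * (π₂ / lam) = ε - 2 * lam := by
    field_simp; linear_combination hprod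
  have hp2 : lam * (π₂ / lam) = π₂ := by field_simp
  have hsum12 : π₁ + π₂ = θ := by rw [hπ₁, hπ₂]; ring
  ext i j
  have hi : (i : ℕ) < n := i.isLt
  have hj : (j : ℕ) < n := j.isLt
  rw [hP i j, Matrix.mul_apply]
  set F : ℕ → ℝ := fun k =>
    (if (i : ℕ) = k then π₁ else if ((i : ℤ) - (k : ℤ)).natAbs = 1 then lam else 0) *
      (if k = (j : ℕ) then π₂ / lam else if ((k : ℤ) - (j : ℤ)).natAbs = 1 then 1 else 0)
    with hF_def
  have hstep : ∑ k : Fin n, Z₁ i k * Z₂ k j = ∑ k ∈ Finset.range n, F k := by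
    rw [← Fin.sum_univ_eq_sum_range F n]
    refine Finset.sum_congr rfl fun k _ => ?_
    rw [hZ₁, hZ₂, hF_def]
    try norm_num
  have hF0 : ∀ k, k < n → k + 1 ≠ (i : ℕ) → k ≠ (i : ℕ) → k ≠ (i : ℕ) + 1 → F k = 0 := by
    intro k hk h1 h2 h3
    rw [hF_def]
    have : (if (i : ℕ) = k then π₁ else if ((i : ℤ) - (k : ℤ)).natAbs = 1 then lam else 0) = 0 := by
      rw [if_neg (by omega), if_neg (by omega)]
    simp only [this, zero_mul]
  rw [hstep, three_sum n (i : ℕ) hi F hF0, hF_def]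
  rcases (by omega : (i:ℕ) = (j:ℕ) ∨ (i:ℕ) = (j:ℕ)+1 ∨ (j:ℕ) = (i:ℕ)+1 ∨ (i:ℕ) = (j:ℕ)+2 ∨
      (j:ℕ) = (i:ℕ)+2 ∨ (i:ℕ)+3 ≤ (j:ℕ) ∨ (j:ℕ)+3 ≤ (i:ℕ)) with h|h|h|h|h|h|h <;>
  · by_cases h1 : 1 ≤ (i : ℕ) <;> by_cases h2 : (i : ℕ) + 1 < n <;>
    · simp only [h1, h2, if_true, if_false, dite_eq_ite]
      repeat first
        | rw [if_pos (by omega)]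
        | rw [if_neg (by omega)]
      simp only [mul_one, one_mul, mul_zero, zero_mul, add_zero, zero_add, hpp, hp2]
      try linarith [hsum12]
end

section
/- Let n ≥ 1 and let λ, π be real numbers with 0 < 2λ < π, and set ψ = arcosh(π/(2λ)) > 0. Let Z be the n×n tridiagonal Toeplitz matrix with diagonal entries π, first off-diagonal entries λ, and zeros elsewhere. Define the n×n matrix M by M_{kl} = (−1)^{k+l} · sinh(ψ·min(k,l)) · sinh(ψ·(n+1−max(k,l))) / (λ · sinh(ψ) · sinh(ψ(n+1))) for 1 ≤ k, l ≤ n. Then Z is invertible and M = Z⁻¹, i.e., Z·M = M·Z = I. -/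
open Matrix Real

/-- The inverse hyperbolic cosine: arcosh x = log (x + sqrt (x^2 - 1)). -/
noncomputable def arcosh (x : ℝ) : ℝ := Real.log (x + Real.sqrt (x ^ 2 - 1))

/-!
Since `π = 2λ cosh ψ`, the sequences `p a = (-1)^a sinh (ψ a)` and `q a = (-1)^a sinh (ψ (n+1-a))`
solve the three-term recurrence `λ x a + π x (a+1) + λ x (a+2) = 0` of `Z` and vanish at the ghost
indices `0` and `n + 1` respectively (rows and columns of `Z` are indexed by `1, …, n`). Hence each
column of the discrete Green's function `p (min a b) * q (max a b) / C` is annihilated by `Z` away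
from the diagonal, while on the diagonal `Z` produces the Casoratian
`λ (p a q (a+1) - p (a+1) q a)`, which is the constant `C = λ sinh ψ sinh (ψ (n+1))` by the
identity `sinh (x + t) sinh (y + t) - sinh x sinh y = sinh t sinh (x + y + t)`.
-/

theorem sinh_add_mul_sinh_add_sub_sinh_mul_sinh (x y t : ℝ) :
    sinh (x + t) * sinh (y + t) - sinh x * sinh y = sinh t * sinh (x + y + t) := by
  simp only [sinh_add, cosh_add]
  linear_combination sinh x * sinh y * cosh_sq_sub_sinh_sq t

def SolvesTridiag (lam piv : ℝ) (x : ℕ → ℝ) : Prop :=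
  ∀ a, lam * x a + piv * x (a + 1) + lam * x (a + 2) = 0

noncomputable def altSinh (ψ c : ℝ) (a : ℕ) : ℝ := (-1) ^ a * sinh (ψ * a + c)

theorem solvesTridiag_altSinh (lam ψ c : ℝ) :
    SolvesTridiag lam (2 * lam * cosh ψ) (altSinh ψ c) := by
  intro a
  simp only [altSinh]
  push_cast
  have h₀ : ψ * a + c = ψ * (a + 1) + c - ψ := by ring
  have h₂ : ψ * (a + 2) + c = ψ * (a + 1) + c + ψ := by ring
  rw [h₀, h₂, sinh_sub _ ψ, sinh_add _ ψ, pow_succ, pow_succ]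
  ring

theorem altSinh_casoratian (ψ m : ℝ) (a : ℕ) :
    altSinh ψ 0 a * altSinh (-ψ) m (a + 1) - altSinh ψ 0 (a + 1) * altSinh (-ψ) m a
      = sinh ψ * sinh m := by
  have h : sinh (ψ * a + ψ) * sinh (m - ψ * a) - sinh (ψ * a) * sinh (m - ψ * a - ψ)
      = sinh ψ * sinh m := by
    have := sinh_add_mul_sinh_add_sub_sinh_mul_sinh (ψ * a) (m - ψ * a - ψ) ψ
    rwa [sub_add_cancel, show ψ * a + (m - ψ * a - ψ) + ψ = m by ring] at this
  simp only [altSinh, pow_succ, add_zero]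
  push_cast
  rw [show -ψ * (a + 1) + m = m - ψ * a - ψ by ring, show -ψ * a + m = m - ψ * a by ring,
    show ψ * ((a : ℝ) + 1) = ψ * a + ψ by ring]
  rcases neg_one_pow_eq_or ℝ a with hs | hs <;> rw [hs] <;> linear_combination h

noncomputable def greenFun (p q : ℕ → ℝ) (c : ℝ) (a b : ℕ) : ℝ :=
  p (min a b) * q (max a b) / c

theorem greenFun_tridiag_eq_ite {lam piv c : ℝ} {p q : ℕ → ℝ}
    (hp : SolvesTridiag lam piv p) (hq : SolvesTridiag lam piv q)
    (hc : ∀ a, lam * (p a * q (a + 1) - p (a + 1) * q a) = c) (hc0 : c ≠ 0) (a b : ℕ) :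
    lam * greenFun p q c a b + piv * greenFun p q c (a + 1) b + lam * greenFun p q c (a + 2) b
      = if a + 1 = b then 1 else 0 := by
  unfold greenFun
  rcases lt_trichotomy (a + 1) b with h | rfl | h
  · rw [if_neg h.ne, min_eq_left (by omega), min_eq_left (by omega), min_eq_left (by omega),
      max_eq_right (by omega), max_eq_right (by omega), max_eq_right (by omega)]
    linear_combination q b / c * hp a
  · rw [if_pos rfl, min_eq_left (by omega), min_self, min_eq_right (by omega),
      max_eq_right (by omega), max_self, max_eq_left (by omega)]
    field_simp
    linear_combination p (a + 1) * hq a + hc a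
  · rw [if_neg h.ne', min_eq_right (by omega), min_eq_right (by omega), min_eq_right (by omega),
      max_eq_left (by omega), max_eq_left (by omega), max_eq_left (by omega)]
    linear_combination p b / c * hq a

theorem sum_tridiag_mul {n : ℕ} {lam piv : ℝ} {Z : Matrix (Fin n) (Fin n) ℝ}
    (hZ : ∀ i j : Fin n, Z i j =
      if (i : ℕ) = (j : ℕ) then piv else if ((i : ℤ) - (j : ℤ)).natAbs = 1 then lam else 0)
    {f : ℕ → ℝ} (h0 : f 0 = 0) (hn : f (n + 1) = 0) (k : Fin n) :
    ∑ j, Z k j * f ((j : ℕ) + 1)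
      = lam * f k + piv * f ((k : ℕ) + 1) + lam * f ((k : ℕ) + 2) := by
  set t : ℕ → ℝ := fun j ↦
    (if (k : ℕ) + 1 = j then piv else if ((k : ℤ) + 1 - j).natAbs = 1 then lam else 0) * f j
  calc ∑ j, Z k j * f ((j : ℕ) + 1) = ∑ j ∈ Finset.range n, t (j + 1) := by
        rw [← Fin.sum_univ_eq_sum_range]
        refine Finset.sum_congr rfl fun j _ ↦ ?_
        simp only [hZ, t]
        push_cast
        simp only [add_sub_add_right_eq_sub]
    _ = ∑ j ∈ Finset.range (n + 2), t j := by
        rw [Finset.sum_range_succ, Finset.sum_range_succ']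
        simp [t, h0, hn]
    _ = ∑ j ∈ ({(k : ℕ), (k : ℕ) + 1, (k : ℕ) + 2} : Finset ℕ), t j := by
        refine (Finset.sum_subset ?_ fun j _ hj ↦ ?_).symm
        · intro j
          simp only [Finset.mem_insert, Finset.mem_singleton, Finset.mem_range]
          omega
        simp only [Finset.mem_insert, Finset.mem_singleton] at hj
        simp only [t]
        rw [if_neg (by omega), if_neg (by omega), zero_mul]
    _ = lam * f k + piv * f ((k : ℕ) + 1) + lam * f ((k : ℕ) + 2) := by
        rw [Finset.sum_insert (by simp), Finset.sum_insert (by simp), Finset.sum_singleton]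
        simp [t, add_assoc]

theorem tridiag_mul_eq_one_of_greenFun {n : ℕ} {lam piv c : ℝ}
    {Z M : Matrix (Fin n) (Fin n) ℝ}
    (hZ : ∀ i j : Fin n, Z i j =
      if (i : ℕ) = (j : ℕ) then piv else if ((i : ℤ) - (j : ℤ)).natAbs = 1 then lam else 0)
    {p q : ℕ → ℝ} (hp : SolvesTridiag lam piv p) (hq : SolvesTridiag lam piv q)
    (hp0 : p 0 = 0) (hqn : q (n + 1) = 0)
    (hc : ∀ a, lam * (p a * q (a + 1) - p (a + 1) * q a) = c) (hc0 : c ≠ 0)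
    (hM : ∀ i j : Fin n, M i j = greenFun p q c ((i : ℕ) + 1) ((j : ℕ) + 1)) :
    Z * M = 1 := by
  ext k l
  rw [mul_apply]
  simp_rw [hM]
  rw [sum_tridiag_mul hZ (f := fun a ↦ greenFun p q c a ((l : ℕ) + 1)) (by simp [greenFun, hp0])
    (by simp [greenFun, hqn]) k, greenFun_tridiag_eq_ite hp hq hc hc0, one_apply]
  simp only [add_left_inj, Fin.val_inj]

theorem stmt_1_general (n : ℕ) (lam piv : ℝ)
    (hlam : 0 < 2 * lam) (hπ : 2 * lam < piv)
    (ψ : ℝ) (hψ : ψ = _root_.arcosh (piv / (2 * lam)))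
    (Z M : Matrix (Fin n) (Fin n) ℝ)
    (hZ : ∀ i j : Fin n,
      Z i j =
        if (i : ℕ) = (j : ℕ) then piv
        else if ((i : ℤ) - (j : ℤ)).natAbs = 1 then lam
        else 0)
    (hM : ∀ i j : Fin n,
      M i j =
        (-1 : ℝ) ^ (((i : ℕ) + 1) + ((j : ℕ) + 1)) *
          Real.sinh (ψ * (min ((i : ℕ) + 1) ((j : ℕ) + 1) : ℝ)) *
          Real.sinh (ψ * ((n : ℝ) + 1 - (max ((i : ℕ) + 1) ((j : ℕ) + 1) : ℝ))) /
          (lam * Real.sinh ψ * Real.sinh (ψ * ((n : ℝ) + 1)))) :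
    IsUnit Z ∧ Z⁻¹ = M ∧ Z * M = 1 ∧ M * Z = 1 := by
  have hx : 1 < piv / (2 * lam) := (one_lt_div hlam).mpr hπ
  have hlam0 : lam ≠ 0 := (by linarith : 0 < lam).ne'
  have hpiv : piv = 2 * lam * cosh ψ := by
    rw [hψ, _root_.arcosh, ← Real.arcosh, Real.cosh_arcosh hx.le]
    field_simp
  have hψ0 : ψ ≠ 0 := hψ ▸ (Real.arcosh_pos hx).ne'
  set m := ψ * ((n : ℝ) + 1)
  have hZM : Z * M = 1 := by
    refine tridiag_mul_eq_one_of_greenFun hZ (p := altSinh ψ 0) (q := altSinh (-ψ) m)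
      (c := lam * (sinh ψ * sinh m)) ?_ ?_ (by simp [altSinh]) (by simp [altSinh, m])
      (fun a ↦ by rw [altSinh_casoratian]) ?_ fun i j ↦ ?_
    · exact hpiv ▸ solvesTridiag_altSinh lam ψ 0
    · simpa only [cosh_neg, ← hpiv] using solvesTridiag_altSinh lam (-ψ) m
    · exact mul_ne_zero hlam0 <| mul_ne_zero (sinh_ne_zero.mpr hψ0) <|
        sinh_ne_zero.mpr <| mul_ne_zero hψ0 (by positivity)
    · rw [hM, greenFun, ← min_add_max ((i : ℕ) + 1) ((j : ℕ) + 1), pow_add]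
      simp only [altSinh, m]
      push_cast
      ring_nf
  exact ⟨IsUnit.of_mul_eq_one M hZM, inv_eq_right_inv hZM, hZM, mul_eq_one_comm.mp hZM⟩

/-- Explicit inverse of a tridiagonal Toeplitz matrix with diagonal π and
off-diagonal λ, where π > 2λ > 0 and ψ = arcosh(π/(2λ)). -/
theorem stmt_1 (n : ℕ) (hn : 1 ≤ n) (lam piv : ℝ)
    (hlam : 0 < 2 * lam) (hπ : 2 * lam < piv)
    (ψ : ℝ) (hψ : ψ = _root_.arcosh (piv / (2 * lam)))
    (Z M : Matrix (Fin n) (Fin n) ℝ)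
    (hZ : ∀ i j : Fin n,
      Z i j =
        if (i : ℕ) = (j : ℕ) then piv
        else if ((i : ℤ) - (j : ℤ)).natAbs = 1 then lam
        else 0)
    (hM : ∀ i j : Fin n,
      M i j =
        (-1 : ℝ) ^ (((i : ℕ) + 1) + ((j : ℕ) + 1)) *
          Real.sinh (ψ * (min ((i : ℕ) + 1) ((j : ℕ) + 1) : ℝ)) *
          Real.sinh (ψ * ((n : ℝ) + 1 - (max ((i : ℕ) + 1) ((j : ℕ) + 1) : ℝ))) /
          (lam * Real.sinh ψ * Real.sinh (ψ * ((n : ℝ) + 1)))) :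
    IsUnit Z ∧ Z⁻¹ = M ∧ Z * M = 1 ∧ M * Z = 1 :=
  stmt_1_general n lam piv hlam hπ ψ hψ Z M hZ hM
end

section
/- Let n ≥ 1 and let λ, π be real numbers with 0 < 2λ < π, and set ψ = arcosh(π/(2λ)) > 0. Let Z be the n×n tridiagonal Toeplitz matrix with diagonal entries π, first off-diagonal entries λ, and zeros elsewhere. Then the entries of Z⁻¹ decay exponentially off the diagonal: for all 1 ≤ k, l ≤ n, |(Z⁻¹)_{kl}| ≤ exp(−ψ·|l−k|) / (2λ · sinh(ψ) · (1 − exp(−2ψ(n+1)))). -/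
open Matrix Real

theorem arcosh_eq_real_arcosh : _root_.arcosh = Real.arcosh := rfl

lemma sinh_sub_add_sinh_add (x y : ℝ) : sinh (x - y) + sinh (x + y) = 2 * cosh y * sinh x := by
  rw [sinh_sub, sinh_add]; ring

lemma sinh_add_mul_sinh_sub_sinh_mul_sinh_sub (x y z : ℝ) :
    sinh (x + y) * sinh z - sinh x * sinh (z - y) = sinh y * sinh (x + z) := by
  simp only [sinh_add, sinh_sub]; ring

lemma sinh_le_exp_div_two (x : ℝ) : sinh x ≤ exp x / 2 := by
  rw [sinh_eq]; linarith [exp_pos (-x)]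

lemma sinh_mul_sinh_le_exp_add_div_four (x : ℝ) {y : ℝ} (hy : 0 ≤ y) :
    sinh x * sinh y ≤ exp (x + y) / 4 := by
  calc sinh x * sinh y ≤ (exp x / 2) * (exp y / 2) :=
        mul_le_mul (sinh_le_exp_div_two x) (sinh_le_exp_div_two y) (sinh_nonneg_iff.2 hy)
          (by positivity)
    _ = exp (x + y) / 4 := by rw [exp_add]; ring

lemma sinh_eq_exp_mul_one_sub_exp (x : ℝ) : sinh x = exp x * (1 - exp (-2 * x)) / 2 := by
  rw [sinh_eq, show -x = x + -2 * x by ring, exp_add]; ring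

/-- For solutions `u`, `v` of `w k + w (k + 2) = 2 c w (k + 1)`, the sign `(-1)^(p+q)` turns
this into the recurrence `w k + w (k + 2) = -2 c w (k + 1)` of a row of `tridiagToeplitz`. -/
def threeTermGreen (u v : ℕ → ℝ) (p q : ℕ) : ℝ := (-1) ^ (p + q) * u (min p q) * v (max p q)

section threeTermGreen

variable {u v : ℕ → ℝ}

lemma threeTermGreen_zero_left (hu : u 0 = 0) (q : ℕ) : threeTermGreen u v 0 q = 0 := by
  simp [threeTermGreen, hu]

lemma threeTermGreen_eq_zero_of_le {m q : ℕ} (hv : v m = 0) (hq : q ≤ m) :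
    threeTermGreen u v m q = 0 := by
  simp [threeTermGreen, max_eq_left hq, hv]

lemma threeTermGreen_recurrence {c W : ℝ} (hu : ∀ k, u k + u (k + 2) = 2 * c * u (k + 1))
    (hv : ∀ k, v k + v (k + 2) = 2 * c * v (k + 1))
    (hW : ∀ k, u (k + 1) * v k - u k * v (k + 1) = W) (p q : ℕ) :
    threeTermGreen u v p q + 2 * c * threeTermGreen u v (p + 1) q + threeTermGreen u v (p + 2) q
      = if p + 1 = q then W else 0 := by
  obtain h | rfl | h : p + 2 ≤ q ∨ p + 1 = q ∨ q ≤ p := by omega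
  · have h₀ : min p q = p := by omega
    have h₁ : min (p + 1) q = p + 1 := by omega
    have h₂ : min (p + 2) q = p + 2 := by omega
    have h₃ : max p q = q := by omega
    have h₄ : max (p + 1) q = q := by omega
    have h₅ : max (p + 2) q = q := by omega
    simp only [threeTermGreen, h₀, h₁, h₂, h₃, h₄, h₅, if_neg (show p + 1 ≠ q by omega)]
    linear_combination (-1) ^ (p + q) * v q * hu p
  · have hsign : ((-1 : ℝ) ^ p) ^ 2 = 1 := by rw [← pow_mul, mul_comm, pow_mul]; norm_num
    have h₀ : min p (p + 1) = p := by omega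
    have h₁ : min (p + 1) (p + 1) = p + 1 := by omega
    have h₂ : min (p + 2) (p + 1) = p + 1 := by omega
    have h₃ : max p (p + 1) = p + 1 := by omega
    have h₄ : max (p + 1) (p + 1) = p + 1 := by omega
    have h₅ : max (p + 2) (p + 1) = p + 2 := by omega
    simp only [threeTermGreen, h₀, h₁, h₂, h₃, h₄, h₅, if_true]
    linear_combination (-((-1) ^ p) ^ 2 * u (p + 1)) * hv p + ((-1) ^ p) ^ 2 * hW p + W * hsign
  · have h₀ : min p q = q := by omega
    have h₁ : min (p + 1) q = q := by omega
    have h₂ : min (p + 2) q = q := by omega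
    have h₃ : max p q = p := by omega
    have h₄ : max (p + 1) q = p + 1 := by omega
    have h₅ : max (p + 2) q = p + 2 := by omega
    simp only [threeTermGreen, h₀, h₁, h₂, h₃, h₄, h₅, if_neg (show p + 1 ≠ q by omega)]
    linear_combination (-1) ^ (p + q) * u q * hv p

end threeTermGreen

def tridiagToeplitz (n : ℕ) (a b : ℝ) : Matrix (Fin n) (Fin n) ℝ :=
  of fun i j => if (i : ℕ) = (j : ℕ) then a else if ((i : ℤ) - (j : ℤ)).natAbs = 1 then b else 0

/-- Columns are indexed from `1` in `g`; the boundary values `g 0 = g (n + 1) = 0` let the first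
and last rows follow the same formula as the others. -/
lemma sum_tridiagToeplitz_mul (n : ℕ) (a b : ℝ) {g : ℕ → ℝ} (hg₀ : g 0 = 0) (hgn : g (n + 1) = 0)
    (i : Fin n) :
    ∑ x : Fin n, tridiagToeplitz n a b i x * g (x + 1) =
      b * g i + a * g (i + 1) + b * g (i + 2) := by
  set h : ℕ → ℝ := fun y => (if y = i then b * g y else 0) + (if y = i + 1 then a * g y else 0)
    + (if y = i + 2 then b * g y else 0) with hh
  have hsummand : ∀ x : ℕ, (if (i : ℕ) = x then a else if ((i : ℤ) - x).natAbs = 1 then b else 0)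
      * g (x + 1) = h (x + 1) := by
    intro x
    simp only [hh]
    split_ifs <;> first | (exfalso; omega) | ring1
  have hh₀ : h 0 = 0 := by simp [hh, hg₀]
  have hhn : h (n + 1) = 0 := by simp [hh, hgn]
  calc ∑ x : Fin n, tridiagToeplitz n a b i x * g (x + 1)
      = ∑ x ∈ Finset.range n, h (x + 1) := by
        simp only [tridiagToeplitz, of_apply, hsummand]
        exact Fin.sum_univ_eq_sum_range (fun x => h (x + 1)) n
    _ = ∑ y ∈ Finset.range (n + 2), h y := by
        rw [Finset.sum_range_succ, Finset.sum_range_succ', hh₀, hhn, add_zero, add_zero]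
    _ = b * g i + a * g (i + 1) + b * g (i + 2) := by
        have := i.isLt
        simp only [hh, Finset.sum_add_distrib, Finset.sum_ite_eq', Finset.mem_range,
          if_pos (show (i : ℕ) < n + 2 by omega), if_pos (show (i : ℕ) + 1 < n + 2 by omega),
          if_pos (show (i : ℕ) + 2 < n + 2 by omega)]

noncomputable def tridiagGreen (n : ℕ) (ψ : ℝ) : ℕ → ℕ → ℝ :=
  threeTermGreen (fun k => sinh (k * ψ)) (fun k => sinh ((n + 1 - k) * ψ))

lemma tridiagGreen_recurrence (n : ℕ) (ψ : ℝ) (p q : ℕ) :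
    tridiagGreen n ψ p q + 2 * cosh ψ * tridiagGreen n ψ (p + 1) q + tridiagGreen n ψ (p + 2) q
      = if p + 1 = q then sinh ψ * sinh ((n + 1) * ψ) else 0 := by
  refine threeTermGreen_recurrence (fun k => ?_) (fun k => ?_) (fun k => ?_) p q
  · convert sinh_sub_add_sinh_add ((k + 1) * ψ) ψ using 3 <;> push_cast <;> ring1
  · rw [add_comm]
    convert sinh_sub_add_sinh_add ((n - k) * ψ) ψ using 3 <;> push_cast <;> ring1
  · convert sinh_add_mul_sinh_sub_sinh_mul_sinh_sub (k * ψ) ψ ((n + 1 - k) * ψ) using 4 <;>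
      push_cast <;> ring1

theorem inv_tridiagToeplitz {n : ℕ} {a b ψ : ℝ} (ha : a = 2 * b * cosh ψ)
    (hD : b * sinh ψ * sinh ((n + 1) * ψ) ≠ 0) :
    (tridiagToeplitz n a b)⁻¹ =
      of fun i j : Fin n =>
        tridiagGreen n ψ ((i : ℕ) + 1) ((j : ℕ) + 1) / (b * sinh ψ * sinh ((n + 1) * ψ)) := by
  refine inv_eq_right_inv (ext fun i j => ?_)
  have hg₀ : tridiagGreen n ψ 0 (j + 1) = 0 := threeTermGreen_zero_left (by simp) _
  have hgn : tridiagGreen n ψ (n + 1) (j + 1) = 0 :=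
    threeTermGreen_eq_zero_of_le (by simp) (by omega)
  rw [mul_apply, one_apply]
  simp only [of_apply]
  rw [sum_tridiagToeplitz_mul n a b (g := fun y => tridiagGreen n ψ y (j + 1) / _)
    (by simp [hg₀]) (by simp [hgn])]
  have hrec := tridiagGreen_recurrence n ψ i (j + 1)
  calc _ = b * (tridiagGreen n ψ i (j + 1) + 2 * cosh ψ * tridiagGreen n ψ (i + 1) (j + 1)
        + tridiagGreen n ψ (i + 2) (j + 1)) / (b * sinh ψ * sinh ((n + 1) * ψ)) := by
          rw [ha]; ring
    _ = _ := by
      rw [hrec]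
      by_cases hij : i = j
      · rw [if_pos (congrArg (· + 1) (congrArg Fin.val hij)), if_pos hij, ← mul_assoc,
          div_self hD]
      · simp [hij, Fin.val_inj]

lemma abs_tridiagGreen_le {n : ℕ} {ψ : ℝ} (hψ : 0 ≤ ψ) {p q : ℕ} (hp : p ≤ n + 1)
    (hq : q ≤ n + 1) :
    |tridiagGreen n ψ p q| ≤ exp (-ψ * |(q : ℝ) - p|) * exp ((n + 1) * ψ) / 4 := by
  have hmin : (0 : ℝ) ≤ (min p q : ℕ) * ψ := by positivity
  have hmax : (0 : ℝ) ≤ (n + 1 - (max p q : ℕ)) * ψ := by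
    have : ((max p q : ℕ) : ℝ) ≤ n + 1 := by exact_mod_cast max_le hp hq
    exact mul_nonneg (by linarith) hψ
  rw [tridiagGreen, threeTermGreen, mul_assoc, abs_mul, abs_neg_one_pow, one_mul,
    abs_of_nonneg (mul_nonneg (sinh_nonneg_iff.2 hmin) (sinh_nonneg_iff.2 hmax)), ← exp_add]
  convert sinh_mul_sinh_le_exp_add_div_four _ hmax using 3
  rw [← max_sub_min_eq_abs]; push_cast; ring

lemma abs_tridiagGreen_div_le {n : ℕ} {b ψ : ℝ} (hb : 0 < b) (hψ : 0 < ψ) {p q : ℕ}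
    (hp : p ≤ n + 1) (hq : q ≤ n + 1) :
    |tridiagGreen n ψ p q / (b * sinh ψ * sinh ((n + 1) * ψ))| ≤
      exp (-ψ * |(q : ℝ) - p|) / (2 * b * sinh ψ * (1 - exp (-2 * ψ * ((n : ℝ) + 1)))) := by
  have hs : 0 < sinh ψ := sinh_pos_iff.2 hψ
  have hE : 0 < 1 - exp (-2 * ψ * ((n : ℝ) + 1)) := by
    rw [sub_pos, exp_lt_one_iff]; nlinarith
  have hsT : sinh ((n + 1) * ψ) = exp ((n + 1) * ψ) * (1 - exp (-2 * ψ * ((n : ℝ) + 1))) / 2 := by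
    rw [sinh_eq_exp_mul_one_sub_exp]; ring_nf
  have hD : 0 < b * sinh ψ * sinh ((n + 1) * ψ) := by rw [hsT]; positivity
  rw [abs_div, abs_of_pos hD, div_le_div_iff₀ hD (by positivity), hsT]
  calc |tridiagGreen n ψ p q| * (2 * b * sinh ψ * (1 - exp (-2 * ψ * ((n : ℝ) + 1))))
      ≤ exp (-ψ * |(q : ℝ) - p|) * exp ((n + 1) * ψ) / 4
          * (2 * b * sinh ψ * (1 - exp (-2 * ψ * ((n : ℝ) + 1)))) := by
        gcongr; exact abs_tridiagGreen_le hψ.le hp hq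
    _ = _ := by ring

theorem stmt_2_general (n : ℕ) (lam piv : ℝ)
    (hlam : 0 < 2 * lam) (hπ : 2 * lam < piv)
    (ψ : ℝ) (hψ : ψ = _root_.arcosh (piv / (2 * lam)))
    (Z : Matrix (Fin n) (Fin n) ℝ)
    (hZ : ∀ i j : Fin n,
      Z i j =
        if (i : ℕ) = (j : ℕ) then piv
        else if ((i : ℤ) - (j : ℤ)).natAbs = 1 then lam
        else 0) :
    ∀ k l : Fin n,
      |Z⁻¹ k l| ≤
        Real.exp (-ψ * |((l : ℕ) : ℝ) - ((k : ℕ) : ℝ)|) /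
          (2 * lam * Real.sinh ψ * (1 - Real.exp (-2 * ψ * ((n : ℝ) + 1)))) := by
  intro k l
  have hlam₀ : 0 < lam := by linarith
  have hc : 1 < piv / (2 * lam) := (one_lt_div hlam).2 hπ
  rw [arcosh_eq_real_arcosh] at hψ
  have hψ₀ : 0 < ψ := hψ ▸ Real.arcosh_pos hc
  have hpiv : piv = 2 * lam * cosh ψ := by rw [hψ, Real.cosh_arcosh hc.le]; field_simp
  have hD : 0 < lam * sinh ψ * sinh ((n + 1) * ψ) :=
    mul_pos (mul_pos hlam₀ (sinh_pos_iff.2 hψ₀)) (sinh_pos_iff.2 (by positivity))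
  rw [show Z = tridiagToeplitz n piv lam from ext hZ, inv_tridiagToeplitz hpiv hD.ne', of_apply,
    show ((l : ℕ) : ℝ) - k = ((l + 1 : ℕ) : ℝ) - (k + 1 : ℕ) by push_cast; ring]
  exact abs_tridiagGreen_div_le hlam₀ hψ₀ (by omega) (by omega)

/-- Exponential off-diagonal decay of the inverse of a tridiagonal Toeplitz
matrix with diagonal π and off-diagonal λ, where π > 2λ > 0. -/
theorem stmt_2 (n : ℕ) (hn : 1 ≤ n) (lam piv : ℝ)
    (hlam : 0 < 2 * lam) (hπ : 2 * lam < piv)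
    (ψ : ℝ) (hψ : ψ = _root_.arcosh (piv / (2 * lam)))
    (Z : Matrix (Fin n) (Fin n) ℝ)
    (hZ : ∀ i j : Fin n,
      Z i j =
        if (i : ℕ) = (j : ℕ) then piv
        else if ((i : ℤ) - (j : ℤ)).natAbs = 1 then lam
        else 0) :
    ∀ k l : Fin n,
      |Z⁻¹ k l| ≤
        Real.exp (-ψ * |((l : ℕ) : ℝ) - ((k : ℕ) : ℝ)|) /
          (2 * lam * Real.sinh ψ * (1 - Real.exp (-2 * ψ * ((n : ℝ) + 1)))) :=
  stmt_2_general n lam piv hlam hπ ψ hψ Z hZ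
end

section
/- Let ψ₁, ψ₂ > 0 be real numbers and let n ≥ 1 and 1 ≤ r ≤ t ≤ n be integers. Then the convolution-type sum satisfies the bound Σ_{i=1}^{n} exp(−ψ₂|i−r| − ψ₁|t−i|) ≤ exp(−min(ψ₁,ψ₂)·(t−r)) · [ (t−r+1) + 2·exp(−(ψ₁+ψ₂)) / (1 − exp(−(ψ₁+ψ₂))) ]. -/
/-!
Write `m = min ψ₁ ψ₂`, `c = ψ₁ + ψ₂`, `x = e^{-c}` and let `d(i)` be the distance from `i` to
`[r, t]`. Since `ψ₂ |i - r| + ψ₁ |t - i| ≥ m (t - r) + c d(i)`, each summand is at most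
`e^{-m(t-r)} x^{d(i)}`. In `∑ x^{d(i)}` each of the `t - r + 1` indices in `[r, t]` contributes
`1`, and on either side of the interval `d` is injective with positive values, so each side
contributes at most the tail `x / (1 - x)` of the geometric series.
-/

open Real Finset

/-- The distance from `i` to the interval `[r, t]`; truncated subtraction kills one summand. -/
def distIcc (r t i : ℕ) : ℕ := (r - i) + (i - t)

lemma distIcc_of_lt {r t i : ℕ} (hrt : r ≤ t) (hi : i < r) : distIcc r t i = r - i := by
  unfold distIcc; omega

lemma distIcc_of_gt {r t i : ℕ} (hrt : r ≤ t) (hi : t < i) : distIcc r t i = i - t := by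
  unfold distIcc; omega

lemma distIcc_eq_zero {r t i : ℕ} (hri : r ≤ i) (hit : i ≤ t) : distIcc r t i = 0 := by
  unfold distIcc; omega

lemma sum_pow_le_div_one_sub_of_injOn {ι : Type*} {x : ℝ} (hx₀ : 0 ≤ x) (hx₁ : x < 1)
    {s : Finset ι} {g : ι → ℕ} (hg : Set.InjOn g s) (hpos : ∀ i ∈ s, 0 < g i) :
    ∑ i ∈ s, x ^ g i ≤ x / (1 - x) := by
  have h0 : 0 ∉ s.image g := by
    simp only [mem_image, not_exists, not_and]
    exact fun i hi hgi => (hpos i hi).ne' hgi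
  have hgeom : ∑ j ∈ insert 0 (s.image g), x ^ j ≤ (1 - x)⁻¹ :=
    tsum_geometric_of_lt_one hx₀ hx₁ ▸
      (summable_geometric_of_lt_one hx₀ hx₁).sum_le_tsum _ fun j _ => pow_nonneg hx₀ j
  rw [sum_insert h0, pow_zero, sum_image hg] at hgeom
  have hx : x / (1 - x) = (1 - x)⁻¹ - 1 := by field_simp [(sub_pos.2 hx₁).ne']; ring
  linarith

lemma sum_pow_distIcc_le {x : ℝ} (hx₀ : 0 ≤ x) (hx₁ : x < 1) {r t : ℕ} (hrt : r ≤ t)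
    (s : Finset ℕ) :
    ∑ i ∈ s, x ^ distIcc r t i ≤ ((t : ℝ) - r + 1) + 2 * x / (1 - x) := by
  rw [← sum_filter_add_sum_filter_not s (· < r),
    ← sum_filter_add_sum_filter_not (s.filter (¬ · < r)) (· ≤ t)]
  have hleft : ∑ i ∈ s.filter (· < r), x ^ distIcc r t i ≤ x / (1 - x) := by
    refine sum_pow_le_div_one_sub_of_injOn hx₀ hx₁ ?_ ?_
    · intro i hi j hj hij
      simp only [coe_filter, Set.mem_ofPred_eq] at hi hj
      rw [distIcc_of_lt hrt hi.2, distIcc_of_lt hrt hj.2] at hij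
      omega
    · intro i hi
      rw [mem_filter] at hi
      rw [distIcc_of_lt hrt hi.2]
      omega
  have hright :
      ∑ i ∈ (s.filter (¬ · < r)).filter (¬ · ≤ t), x ^ distIcc r t i ≤ x / (1 - x) := by
    refine sum_pow_le_div_one_sub_of_injOn hx₀ hx₁ ?_ ?_
    · intro i hi j hj hij
      simp only [coe_filter, Set.mem_ofPred_eq, not_le] at hi hj
      rw [distIcc_of_gt hrt hi.2, distIcc_of_gt hrt hj.2] at hij
      omega
    · intro i hi
      simp only [mem_filter, not_le] at hi
      rw [distIcc_of_gt hrt hi.2]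
      omega
  have hmiddle :
      ∑ i ∈ (s.filter (¬ · < r)).filter (· ≤ t), x ^ distIcc r t i ≤ (t : ℝ) - r + 1 := by
    calc ∑ i ∈ (s.filter (¬ · < r)).filter (· ≤ t), x ^ distIcc r t i
        = ((s.filter (¬ · < r)).filter (· ≤ t)).card := by
          rw [card_eq_sum_ones, Nat.cast_sum]
          refine sum_congr rfl fun i hi => ?_
          simp only [mem_filter, not_lt] at hi
          rw [distIcc_eq_zero hi.1.2 hi.2, pow_zero, Nat.cast_one]
      _ ≤ (Icc r t).card := by
          refine Nat.cast_le.2 (card_le_card fun i hi => ?_)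
          simp only [mem_filter, not_lt] at hi
          exact mem_Icc.2 ⟨hi.1.2, hi.2⟩
      _ = (t : ℝ) - r + 1 := by
          rw [Nat.card_Icc, Nat.cast_sub (by omega)]
          push_cast
          ring
  rw [mul_div_assoc]
  linarith

lemma min_mul_add_mul_distIcc_le (ψ₁ ψ₂ : ℝ) {r t : ℕ} (hrt : r ≤ t) (i : ℕ) :
    min ψ₁ ψ₂ * ((t : ℝ) - r) + (ψ₁ + ψ₂) * distIcc r t i ≤
      ψ₂ * |(i : ℝ) - r| + ψ₁ * |(t : ℝ) - i| := by
  have h₁ := min_le_left ψ₁ ψ₂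
  have h₂ := min_le_right ψ₁ ψ₂
  have hrt' : (r : ℝ) ≤ t := Nat.cast_le.2 hrt
  rcases lt_or_ge i r with hir | hri
  · have hir' : (i : ℝ) ≤ r := Nat.cast_le.2 hir.le
    rw [distIcc_of_lt hrt hir, Nat.cast_sub hir.le, abs_of_nonpos (by linarith),
      abs_of_nonneg (by linarith)]
    linarith [mul_le_mul_of_nonneg_right h₁ (sub_nonneg.2 hrt')]
  rcases le_or_gt i t with hit | hti
  · have hri' : (r : ℝ) ≤ i := Nat.cast_le.2 hri
    have hit' : (i : ℝ) ≤ t := Nat.cast_le.2 hit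
    rw [distIcc_eq_zero hri hit, Nat.cast_zero, abs_of_nonneg (by linarith),
      abs_of_nonneg (by linarith)]
    linarith [mul_le_mul_of_nonneg_right h₁ (sub_nonneg.2 hit'),
      mul_le_mul_of_nonneg_right h₂ (sub_nonneg.2 hri')]
  · have hti' : (t : ℝ) ≤ i := Nat.cast_le.2 hti.le
    rw [distIcc_of_gt hrt hti, Nat.cast_sub hti.le, abs_of_nonneg (by linarith),
      abs_of_nonpos (by linarith)]
    linarith [mul_le_mul_of_nonneg_right h₂ (sub_nonneg.2 hrt')]

lemma exp_le_exp_mul_pow_distIcc (ψ₁ ψ₂ : ℝ) {r t : ℕ} (hrt : r ≤ t) (i : ℕ) :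
    exp (-ψ₂ * |(i : ℝ) - r| - ψ₁ * |(t : ℝ) - i|) ≤
      exp (-(min ψ₁ ψ₂) * ((t : ℝ) - r)) * exp (-(ψ₁ + ψ₂)) ^ distIcc r t i := by
  rw [← exp_nat_mul, ← exp_add, exp_le_exp]
  linarith [min_mul_add_mul_distIcc_le ψ₁ ψ₂ hrt i]

theorem stmt_3_general (ψ₁ ψ₂ : ℝ) (hψ₁ : 0 < ψ₁) (hψ₂ : 0 < ψ₂)
    (n r t : ℕ) (hrt : r ≤ t) :
    ∑ i ∈ Finset.Icc 1 n,
        Real.exp (-ψ₂ * |(i : ℝ) - (r : ℝ)| - ψ₁ * |(t : ℝ) - (i : ℝ)|) ≤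
      Real.exp (-(min ψ₁ ψ₂) * ((t : ℝ) - (r : ℝ))) *
        (((t : ℝ) - (r : ℝ) + 1) +
          2 * Real.exp (-(ψ₁ + ψ₂)) / (1 - Real.exp (-(ψ₁ + ψ₂)))) := by
  have hx₁ : exp (-(ψ₁ + ψ₂)) < 1 := exp_lt_one_iff.2 (by linarith)
  calc ∑ i ∈ Icc 1 n, exp (-ψ₂ * |(i : ℝ) - r| - ψ₁ * |(t : ℝ) - i|)
      ≤ ∑ i ∈ Icc 1 n,
          exp (-(min ψ₁ ψ₂) * ((t : ℝ) - r)) * exp (-(ψ₁ + ψ₂)) ^ distIcc r t i :=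
        sum_le_sum fun i _ => exp_le_exp_mul_pow_distIcc ψ₁ ψ₂ hrt i
    _ = exp (-(min ψ₁ ψ₂) * ((t : ℝ) - r)) *
          ∑ i ∈ Icc 1 n, exp (-(ψ₁ + ψ₂)) ^ distIcc r t i :=
        (mul_sum _ _ _).symm
    _ ≤ _ := mul_le_mul_of_nonneg_left
        (sum_pow_distIcc_le (exp_pos _).le hx₁ hrt _) (exp_pos _).le

/-- Bound on the convolution-type sum of two-sided exponential decays. -/
theorem stmt_3 (ψ₁ ψ₂ : ℝ) (hψ₁ : 0 < ψ₁) (hψ₂ : 0 < ψ₂)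
    (n r t : ℕ) (hn : 1 ≤ n) (hr : 1 ≤ r) (hrt : r ≤ t) (htn : t ≤ n) :
    ∑ i ∈ Finset.Icc 1 n,
        Real.exp (-ψ₂ * |(i : ℝ) - (r : ℝ)| - ψ₁ * |(t : ℝ) - (i : ℝ)|) ≤
      Real.exp (-(min ψ₁ ψ₂) * ((t : ℝ) - (r : ℝ))) *
        (((t : ℝ) - (r : ℝ) + 1) +
          2 * Real.exp (-(ψ₁ + ψ₂)) / (1 - Real.exp (-(ψ₁ + ψ₂)))) :=
  stmt_3_general ψ₁ ψ₂ hψ₁ hψ₂ n r t hrt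
end

section
/- Let γₙ be the product on ℝⁿ of n copies of the standard normal distribution N(0,1), let L be a real d_x×n matrix and M a real d_y×n matrix, and let A be a symmetric d_x×d_x real matrix and B a symmetric d_y×d_y real matrix. For z ∈ ℝⁿ set x = Lz and y = Mz, and let Σ_{xy} = L Mᵀ (the cross-covariance of x and y). Then the covariance of the quadratic forms xᵀAx and yᵀBy under γₙ, i.e. ∫ (xᵀAx)(yᵀBy) dγₙ(z) − (∫ xᵀAx dγₙ(z))·(∫ yᵀBy dγₙ(z)), equals Σ_{i,j=1}^{d_x} Σ_{k,l=1}^{d_y} A_{ij} B_{kl} [ (Σ_{xy})_{ik}(Σ_{xy})_{jl} + (Σ_{xy})_{il}(Σ_{xy})_{jk} ]. -/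
/-!
Expanding both quadratic forms in the coordinates of `x = Lz` and `y = Mz`, the covariance is
`∑ A i j * B k l * (E[x i * x j * y k * y l] - E[x i * x j] * E[y k * y l])`. With `Σ = L Mᵀ`,
Isserlis' theorem
`E[x i * x j * y k * y l] = (L Lᵀ) i j * (M Mᵀ) k l + Σ i k * Σ j l + Σ i l * Σ j k`
cancels the product of the means. For linear forms of a standard Gaussian vector, Isserlis' theorem
reduces by Fubini to the one-dimensional moments up to order four, which come from Stein's
recursion `E[X ^ (k + 2)] = (k + 1) * E[X ^ k]`.
-/

open Matrix MeasureTheory ProbabilityTheory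

lemma hasDerivAt_gaussianPDFReal_zero_one (x : ℝ) :
    HasDerivAt (gaussianPDFReal 0 1) (-x * gaussianPDFReal 0 1 x) x := by
  have hpdf : gaussianPDFReal 0 1 = fun x => (√(2 * Real.pi))⁻¹ * Real.exp (-x ^ 2 / 2) := by
    ext y; simp [gaussianPDFReal]
  rw [hpdf]
  have hexponent : HasDerivAt (fun y : ℝ => -y ^ 2 / 2) (-x) x := by
    simpa [neg_div] using ((hasDerivAt_pow 2 x).div_const 2).fun_neg
  exact (hexponent.exp.const_mul _).congr_deriv (by ring)

lemma integrable_pow_gaussianReal (k : ℕ) :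
    Integrable (fun x : ℝ => x ^ k) (gaussianReal 0 1) :=
  integrable_pow_of_mem_interior_integrableExpSet (by simp) k

lemma integrable_gaussianPDFReal_mul_pow (k : ℕ) :
    Integrable fun x : ℝ => gaussianPDFReal 0 1 x * x ^ k := by
  have h := integrable_pow_gaussianReal k
  rw [gaussianReal_of_var_ne_zero 0 one_ne_zero, integrable_withDensity_iff_integrable_smul'
    (measurable_gaussianPDF 0 1) (ae_of_all _ fun _ => gaussianPDF_lt_top)] at h
  simpa [gaussianPDF, gaussianPDFReal_nonneg] using h

-- Stein's identity `E[X f(X)] = E[f'(X)]` for `f = X ^ (k + 1)`, i.e. integration by parts.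
lemma integral_pow_add_two_gaussianReal (k : ℕ) :
    ∫ x, x ^ (k + 2) ∂gaussianReal 0 1 = (k + 1) * ∫ x, x ^ k ∂gaussianReal 0 1 := by
  have hderiv (x : ℝ) : HasDerivAt (fun x => gaussianPDFReal 0 1 x * x ^ (k + 1))
      ((k + 1) * (gaussianPDFReal 0 1 x * x ^ k) - gaussianPDFReal 0 1 x * x ^ (k + 2)) x := by
    refine ((hasDerivAt_gaussianPDFReal_zero_one x).mul (hasDerivAt_pow (k + 1) x)).congr_deriv ?_
    push_cast
    ring
  have h := integral_eq_zero_of_hasDerivAt_of_integrable hderiv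
    (((integrable_gaussianPDFReal_mul_pow k).const_mul _).sub
      (integrable_gaussianPDFReal_mul_pow (k + 2)))
    (integrable_gaussianPDFReal_mul_pow (k + 1))
  rw [integral_sub ((integrable_gaussianPDFReal_mul_pow k).const_mul _)
    (integrable_gaussianPDFReal_mul_pow (k + 2)), integral_const_mul, sub_eq_zero] at h
  simp only [integral_gaussianReal_eq_integral_smul one_ne_zero, smul_eq_mul, h]

lemma integral_pow_zero_gaussianReal : ∫ x, x ^ 0 ∂gaussianReal 0 1 = 1 := by simp

lemma integral_pow_one_gaussianReal : ∫ x, x ^ 1 ∂gaussianReal 0 1 = 0 := by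
  simp [integral_id_gaussianReal]

lemma integral_pow_two_gaussianReal : ∫ x, x ^ 2 ∂gaussianReal 0 1 = 1 := by
  simpa using integral_pow_add_two_gaussianReal 0

lemma integral_pow_four_gaussianReal : ∫ x, x ^ 4 ∂gaussianReal 0 1 = 3 := by
  rw [integral_pow_add_two_gaussianReal 2, integral_pow_two_gaussianReal]; norm_num

noncomputable abbrev stdGaussianPi (ι : Type*) [Fintype ι] : Measure (ι → ℝ) :=
  Measure.pi fun _ => gaussianReal 0 1

section Monomials

variable {ι : Type*} [Fintype ι]

lemma integral_prod_pow_stdGaussianPi (k : ι → ℕ) :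
    ∫ z, ∏ i, z i ^ k i ∂stdGaussianPi ι = ∏ i, ∫ x, x ^ k i ∂gaussianReal 0 1 :=
  integral_fintype_prod_eq_prod fun i x => x ^ k i

lemma integrable_prod_pow_stdGaussianPi (k : ι → ℕ) :
    Integrable (fun z => ∏ i, z i ^ k i) (stdGaussianPi ι) :=
  Integrable.fintype_prod fun i => integrable_pow_gaussianReal (k i)

variable [DecidableEq ι]

lemma prod_pow_ite_eq (z : ι → ℝ) (a : ι) : ∏ i, z i ^ (if a = i then 1 else 0) = z a := by
  simp [pow_ite]

lemma prod_ite_add_ite_eq {m : ℕ → ℝ} (h0 : m 0 = 1) (h1 : m 1 = 0) (h2 : m 2 = 1)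
    (a b : ι) :
    ∏ i, m ((if a = i then 1 else 0) + (if b = i then 1 else 0)) = if a = b then 1 else 0 := by
  rw [← Finset.prod_subset (Finset.subset_univ {a, b}) fun i _ hi => by
    simp only [Finset.mem_insert, Finset.mem_singleton, not_or] at hi
    simp [Ne.symm hi.1, Ne.symm hi.2, h0]]
  by_cases hab : a = b <;> simp_all [Finset.prod_insert, eq_comm]

-- Only the coincidence pattern of `a, b, c, d` matters, and `m 1 = 0` kills every pattern with an
-- unpaired index.
lemma prod_ite_add_ite_add_ite_add_ite_eq {m : ℕ → ℝ} (h0 : m 0 = 1) (h1 : m 1 = 0)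
    (h2 : m 2 = 1) (h4 : m 4 = 3) (a b c d : ι) :
    ∏ i, m ((if a = i then 1 else 0) + (if b = i then 1 else 0) + (if c = i then 1 else 0) +
      (if d = i then 1 else 0)) =
      (if a = b then 1 else 0) * (if c = d then 1 else 0) +
      (if a = c then 1 else 0) * (if b = d then 1 else 0) +
      (if a = d then 1 else 0) * (if b = c then 1 else 0) := by
  rw [← Finset.prod_subset (Finset.subset_univ {a, b, c, d}) fun i _ hi => by
    simp only [Finset.mem_insert, Finset.mem_singleton, not_or] at hi
    simp [Ne.symm hi.1, Ne.symm hi.2.1, Ne.symm hi.2.2.1, Ne.symm hi.2.2.2, h0]]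
  by_cases hab : a = b <;> by_cases hac : a = c <;> by_cases had : a = d <;>
    by_cases hbc : b = c <;> by_cases hbd : b = d <;> by_cases hcd : c = d <;>
    simp_all [Finset.prod_insert, eq_comm]
  norm_num

lemma prod_pow_ite_add_ite (z : ι → ℝ) (a b : ι) :
    ∏ i, z i ^ ((if a = i then 1 else 0) + (if b = i then 1 else 0)) = z a * z b := by
  simp only [pow_add, Finset.prod_mul_distrib, prod_pow_ite_eq]

lemma prod_pow_ite_add_ite_add_ite_add_ite (z : ι → ℝ) (a b c d : ι) :
    ∏ i, z i ^ ((if a = i then 1 else 0) + (if b = i then 1 else 0) + (if c = i then 1 else 0) +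
      (if d = i then 1 else 0)) = z a * z b * z c * z d := by
  simp only [pow_add, Finset.prod_mul_distrib, prod_pow_ite_eq]

lemma integrable_mul_stdGaussianPi (a b : ι) :
    Integrable (fun z => z a * z b) (stdGaussianPi ι) := by
  simpa only [prod_pow_ite_add_ite] using integrable_prod_pow_stdGaussianPi fun i =>
    (if a = i then 1 else 0) + (if b = i then 1 else 0)

lemma integrable_mul_mul_mul_stdGaussianPi (a b c d : ι) :
    Integrable (fun z => z a * z b * z c * z d) (stdGaussianPi ι) := by
  simpa only [prod_pow_ite_add_ite_add_ite_add_ite] using integrable_prod_pow_stdGaussianPi fun i =>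
    (if a = i then 1 else 0) + (if b = i then 1 else 0) + (if c = i then 1 else 0) +
      (if d = i then 1 else 0)

lemma integral_mul_stdGaussianPi (a b : ι) :
    ∫ z, z a * z b ∂stdGaussianPi ι = if a = b then 1 else 0 := by
  simp only [← prod_pow_ite_add_ite, integral_prod_pow_stdGaussianPi]
  exact prod_ite_add_ite_eq (m := fun k => ∫ x, x ^ k ∂gaussianReal 0 1)
    integral_pow_zero_gaussianReal integral_pow_one_gaussianReal
    integral_pow_two_gaussianReal a b

lemma integral_mul_mul_mul_stdGaussianPi (a b c d : ι) :
    ∫ z, z a * z b * z c * z d ∂stdGaussianPi ι =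
      (if a = b then 1 else 0) * (if c = d then 1 else 0) +
      (if a = c then 1 else 0) * (if b = d then 1 else 0) +
      (if a = d then 1 else 0) * (if b = c then 1 else 0) := by
  simp only [← prod_pow_ite_add_ite_add_ite_add_ite, integral_prod_pow_stdGaussianPi]
  exact prod_ite_add_ite_add_ite_add_ite_eq (m := fun k => ∫ x, x ^ k ∂gaussianReal 0 1)
    integral_pow_zero_gaussianReal integral_pow_one_gaussianReal integral_pow_two_gaussianReal
    integral_pow_four_gaussianReal a b c d

end Monomials

lemma sum_sum_mul_sum_sum {α β γ δ R : Type*} [Fintype α] [Fintype β] [Fintype γ] [Fintype δ]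
    [NonUnitalNonAssocSemiring R] (f : α → β → R) (g : γ → δ → R) :
    (∑ a, ∑ b, f a b) * (∑ c, ∑ d, g c d) = ∑ a, ∑ b, ∑ c, ∑ d, f a b * g c d := by
  simp only [Finset.sum_mul]
  simp only [Finset.mul_sum]

lemma integral_sum_sum {Ω α β : Type*} [MeasurableSpace Ω] {μ : Measure Ω} [Fintype α]
    [Fintype β] (f : α → β → Ω → ℝ) (hf : ∀ a b, Integrable (f a b) μ) :
    ∫ ω, ∑ a, ∑ b, f a b ω ∂μ = ∑ a, ∑ b, ∫ ω, f a b ω ∂μ := by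
  rw [integral_finsetSum _ fun a _ => integrable_finsetSum _ fun b _ => hf a b]
  exact Finset.sum_congr rfl fun a _ => integral_finsetSum _ fun b _ => hf a b

section LinearForms

variable {ι : Type*} [Fintype ι]

lemma dotProduct_mul_dotProduct_eq_sum (u v z : ι → ℝ) :
    (u ⬝ᵥ z) * (v ⬝ᵥ z) = ∑ a, ∑ b, u a * v b * (z a * z b) := by
  simp only [dotProduct, Fintype.sum_mul_sum, mul_mul_mul_comm]

lemma dotProduct_mul_dotProduct_mul_dotProduct_mul_dotProduct_eq_sum (u v w t z : ι → ℝ) :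
    (u ⬝ᵥ z) * (v ⬝ᵥ z) * (w ⬝ᵥ z) * (t ⬝ᵥ z) =
      ∑ a, ∑ b, ∑ c, ∑ d, u a * v b * w c * t d * (z a * z b * z c * z d) := by
  rw [mul_assoc, dotProduct_mul_dotProduct_eq_sum u v, dotProduct_mul_dotProduct_eq_sum w t,
    sum_sum_mul_sum_sum]
  refine Fintype.sum_congr _ _ fun a => Fintype.sum_congr _ _ fun b =>
    Fintype.sum_congr _ _ fun c => Fintype.sum_congr _ _ fun d => by ring

lemma dotProduct_mulVec_self_eq_sum (x : ι → ℝ) (A : Matrix ι ι ℝ) :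
    x ⬝ᵥ A *ᵥ x = ∑ i, ∑ j, A i j * (x i * x j) := by
  simp only [dotProduct, mulVec, Finset.mul_sum]
  exact Fintype.sum_congr _ _ fun i => Fintype.sum_congr _ _ fun j => by ring

variable [DecidableEq ι]

lemma integrable_dotProduct_mul_stdGaussianPi (u v : ι → ℝ) :
    Integrable (fun z => (u ⬝ᵥ z) * (v ⬝ᵥ z)) (stdGaussianPi ι) := by
  simp only [dotProduct_mul_dotProduct_eq_sum]
  exact integrable_finsetSum _ fun a _ => integrable_finsetSum _ fun b _ =>
    (integrable_mul_stdGaussianPi a b).const_mul _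

lemma integral_dotProduct_mul_stdGaussianPi (u v : ι → ℝ) :
    ∫ z, (u ⬝ᵥ z) * (v ⬝ᵥ z) ∂stdGaussianPi ι = u ⬝ᵥ v := by
  simp only [dotProduct_mul_dotProduct_eq_sum]
  rw [integral_sum_sum _ fun a b => (integrable_mul_stdGaussianPi a b).const_mul _]
  simp [integral_const_mul, integral_mul_stdGaussianPi, dotProduct]

lemma integrable_dotProduct_mul_dotProduct_mul_dotProduct_mul_stdGaussianPi (u v w t : ι → ℝ) :
    Integrable (fun z => (u ⬝ᵥ z) * (v ⬝ᵥ z) * (w ⬝ᵥ z) * (t ⬝ᵥ z)) (stdGaussianPi ι) := by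
  simp only [dotProduct_mul_dotProduct_mul_dotProduct_mul_dotProduct_eq_sum]
  exact integrable_finsetSum _ fun a _ => integrable_finsetSum _ fun b _ =>
    integrable_finsetSum _ fun c _ => integrable_finsetSum _ fun d _ =>
      (integrable_mul_mul_mul_stdGaussianPi a b c d).const_mul _

lemma integral_dotProduct_mul_dotProduct_mul_dotProduct_mul_stdGaussianPi (u v w t : ι → ℝ) :
    ∫ z, (u ⬝ᵥ z) * (v ⬝ᵥ z) * (w ⬝ᵥ z) * (t ⬝ᵥ z) ∂stdGaussianPi ι =
      (u ⬝ᵥ v) * (w ⬝ᵥ t) + (u ⬝ᵥ w) * (v ⬝ᵥ t) + (u ⬝ᵥ t) * (v ⬝ᵥ w) := by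
  simp only [dotProduct_mul_dotProduct_mul_dotProduct_mul_dotProduct_eq_sum]
  have hint (a b c d : ι) := (integrable_mul_mul_mul_stdGaussianPi a b c d).const_mul
    (u a * v b * w c * t d)
  rw [integral_sum_sum _ fun a b => integrable_finsetSum _ fun c _ =>
    integrable_finsetSum _ fun d _ => hint a b c d]
  simp only [integral_sum_sum _ (hint _ _), integral_const_mul, integral_mul_mul_mul_stdGaussianPi]
  simp only [mul_add, Finset.sum_add_distrib]
  simp [mul_ite, Finset.sum_ite_eq, dotProduct, Fintype.sum_mul_sum, mul_comm,
    mul_left_comm]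

end LinearForms

section QuadraticForms

variable {ι κ κ' : Type*} [Fintype ι] [DecidableEq ι] [Fintype κ] [Fintype κ']

lemma integral_quadForm_stdGaussianPi (L : Matrix κ ι ℝ) (A : Matrix κ κ ℝ) :
    ∫ z, L *ᵥ z ⬝ᵥ A *ᵥ (L *ᵥ z) ∂stdGaussianPi ι = ∑ i, ∑ j, A i j * (L * Lᵀ) i j := by
  simp only [dotProduct_mulVec_self_eq_sum, mulVec_apply, row_apply']
  rw [integral_sum_sum _ fun i j =>
    (integrable_dotProduct_mul_stdGaussianPi (L i) (L j)).const_mul (A i j)]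
  simp only [integral_const_mul, integral_dotProduct_mul_stdGaussianPi]
  rfl

lemma integral_quadForm_mul_quadForm_stdGaussianPi (L : Matrix κ ι ℝ) (M : Matrix κ' ι ℝ)
    (A : Matrix κ κ ℝ) (B : Matrix κ' κ' ℝ) :
    ∫ z, (L *ᵥ z ⬝ᵥ A *ᵥ (L *ᵥ z)) * (M *ᵥ z ⬝ᵥ B *ᵥ (M *ᵥ z)) ∂stdGaussianPi ι =
      ∑ i, ∑ j, ∑ k, ∑ l, A i j * B k l * ((L * Lᵀ) i j * (M * Mᵀ) k l +
        (L * Mᵀ) i k * (L * Mᵀ) j l + (L * Mᵀ) i l * (L * Mᵀ) j k) := by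
  have hexpand (z : ι → ℝ) :
      (L *ᵥ z ⬝ᵥ A *ᵥ (L *ᵥ z)) * (M *ᵥ z ⬝ᵥ B *ᵥ (M *ᵥ z)) = ∑ i, ∑ j, ∑ k, ∑ l,
        A i j * B k l * ((L i ⬝ᵥ z) * (L j ⬝ᵥ z) * (M k ⬝ᵥ z) * (M l ⬝ᵥ z)) := by
    simp only [dotProduct_mulVec_self_eq_sum, mulVec_apply, row_apply', sum_sum_mul_sum_sum]
    exact Fintype.sum_congr _ _ fun i => Fintype.sum_congr _ _ fun j =>
      Fintype.sum_congr _ _ fun k => Fintype.sum_congr _ _ fun l => by ring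
  have hint (i j : κ) (k l : κ') :=
    (integrable_dotProduct_mul_dotProduct_mul_dotProduct_mul_stdGaussianPi
      (L i) (L j) (M k) (M l)).const_mul (A i j * B k l)
  simp only [hexpand]
  rw [integral_sum_sum _ fun i j => integrable_finsetSum _ fun k _ =>
    integrable_finsetSum _ fun l _ => hint i j k l]
  simp only [integral_sum_sum _ (hint _ _), integral_const_mul,
    integral_dotProduct_mul_dotProduct_mul_dotProduct_mul_stdGaussianPi]
  rfl

end QuadraticForms

theorem stmt_6_general (n dx dy : ℕ)
    (L : Matrix (Fin dx) (Fin n) ℝ) (M : Matrix (Fin dy) (Fin n) ℝ)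
    (A : Matrix (Fin dx) (Fin dx) ℝ) (B : Matrix (Fin dy) (Fin dy) ℝ) :
    (∫ z : Fin n → ℝ,
        (L.mulVec z ⬝ᵥ A.mulVec (L.mulVec z)) *
          (M.mulVec z ⬝ᵥ B.mulVec (M.mulVec z))
        ∂(Measure.pi fun _ => gaussianReal 0 1)) -
      (∫ z : Fin n → ℝ, L.mulVec z ⬝ᵥ A.mulVec (L.mulVec z)
          ∂(Measure.pi fun _ => gaussianReal 0 1)) *
        (∫ z : Fin n → ℝ, M.mulVec z ⬝ᵥ B.mulVec (M.mulVec z)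
          ∂(Measure.pi fun _ => gaussianReal 0 1)) =
      ∑ i : Fin dx, ∑ j : Fin dx, ∑ k : Fin dy, ∑ l : Fin dy,
        A i j * B k l *
          ((L * Mᵀ) i k * (L * Mᵀ) j l + (L * Mᵀ) i l * (L * Mᵀ) j k) := by
  rw [integral_quadForm_mul_quadForm_stdGaussianPi, integral_quadForm_stdGaussianPi,
    integral_quadForm_stdGaussianPi]
  simp only [sum_sum_mul_sum_sum, ← Finset.sum_sub_distrib]
  exact Fintype.sum_congr _ _ fun i => Fintype.sum_congr _ _ fun j =>
    Fintype.sum_congr _ _ fun k => Fintype.sum_congr _ _ fun l => by ring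

/-- Covariance of two Gaussian quadratic forms xᵀAx and yᵀBy, where
x = Lz, y = Mz and z is a standard Gaussian vector, expressed via the
cross-covariance matrix Σ_{xy} = L Mᵀ. -/
theorem stmt_6 (n dx dy : ℕ)
    (L : Matrix (Fin dx) (Fin n) ℝ) (M : Matrix (Fin dy) (Fin n) ℝ)
    (A : Matrix (Fin dx) (Fin dx) ℝ) (B : Matrix (Fin dy) (Fin dy) ℝ)
    (hA : A.IsSymm) (hB : B.IsSymm) :
    (∫ z : Fin n → ℝ,
        (L.mulVec z ⬝ᵥ A.mulVec (L.mulVec z)) *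
          (M.mulVec z ⬝ᵥ B.mulVec (M.mulVec z))
        ∂(Measure.pi fun _ => gaussianReal 0 1)) -
      (∫ z : Fin n → ℝ, L.mulVec z ⬝ᵥ A.mulVec (L.mulVec z)
          ∂(Measure.pi fun _ => gaussianReal 0 1)) *
        (∫ z : Fin n → ℝ, M.mulVec z ⬝ᵥ B.mulVec (M.mulVec z)
          ∂(Measure.pi fun _ => gaussianReal 0 1)) =
      ∑ i : Fin dx, ∑ j : Fin dx, ∑ k : Fin dy, ∑ l : Fin dy,
        A i j * B k l *
          ((L * Mᵀ) i k * (L * Mᵀ) j l + (L * Mᵀ) i l * (L * Mᵀ) j k) :=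
  stmt_6_general n dx dy L M A B
end
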